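/- arXiv:1811.08038 — 11 statements merged into one kernel-verified Lean document; each statement's English description precedes it below -/
import Mathlib

section
/- Let r : ℝ → ℝ be locally integrable with r(u) ≥ 0 for all u, and set B(t,T) := exp(∫_t^T r(u) du). Let T0 < T1 < T2 be real numbers, let s1, s2 be real numbers with s2 > 0 and (T1 − T0)·s1 ≥ (T2 − T0)·s2 (violation of the No-arbitrage condition), and let L : ℝ → ℝ satisfy L(t) ≥ 0 for all t. For τ ∈ ℝ define the accumulated value at T2 of the strategy 'short the [T0,T1]-CDS at spread s1, long the [T0,T2]-CDS at spread s2': X(τ) := (s1 − s2)·∫_{T0}^{min(τ,T1)} B(t,T2) dt − s2·∫_{T1}^{max(T1, min(τ,T2))} B(t,T2) dt + (if T1 < τ ≤ T2 then L(τ)·B(τ,T2) else 0). Then: (i) X(τ) ≥ 0 for every τ > T0; (ii) X(τ) > 0 whenever T0 < τ ≤ T1; and (iii) X(τ) ≥ L(τ)·B(τ,T2) whenever T1 < τ ≤ T2. -/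
open MeasureTheory

/-- Accumulated value at `T2` of the strategy "short the `[T0,T1]`-CDS at spread `s1`,
long the `[T0,T2]`-CDS at spread `s2`" is nonnegative for `τ > T0`, strictly positive for
`T0 < τ ≤ T1`, and at least the loss-given-default term for `T1 < τ ≤ T2`, whenever the
No-arbitrage condition `(T1 − T0)·s1 < (T2 − T0)·s2` is violated and rates are nonnegative. -/
theorem stmt_0
    (r : ℝ → ℝ) (hr : LocallyIntegrable r) (hr0 : ∀ u, 0 ≤ r u)
    (B : ℝ → ℝ → ℝ) (hB : ∀ t T, B t T = Real.exp (∫ u in t..T, r u))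
    (T0 T1 T2 : ℝ) (h01 : T0 < T1) (h12 : T1 < T2)
    (s1 s2 : ℝ) (hs2 : 0 < s2)
    (hviol : (T2 - T0) * s2 ≤ (T1 - T0) * s1)
    (L : ℝ → ℝ) (hL : ∀ t, 0 ≤ L t)
    (X : ℝ → ℝ)
    (hX : ∀ τ, X τ =
      (s1 - s2) * (∫ t in T0..(min τ T1), B t T2)
        - s2 * (∫ t in T1..(max T1 (min τ T2)), B t T2)
        + (if T1 < τ ∧ τ ≤ T2 then L τ * B τ T2 else 0)) :
    (∀ τ, T0 < τ → 0 ≤ X τ) ∧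
    (∀ τ, T0 < τ → τ ≤ T1 → 0 < X τ) ∧
    (∀ τ, T1 < τ → τ ≤ T2 → L τ * B τ T2 ≤ X τ) := by
  -- r is interval integrable on every interval
  have hrint : ∀ a b : ℝ, IntervalIntegrable r volume a b := fun a b =>
    (hr.integrableOn_isCompact isCompact_uIcc).intervalIntegrable
  set g : ℝ → ℝ := fun t => B t T2 with hg_def
  have hgexp : ∀ t, g t = Real.exp (∫ u in t..T2, r u) := fun t => hB t T2
  -- g is continuous
  have hgcont : Continuous g := by
    have h1 : Continuous fun t => ∫ u in T2..t, r u :=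
      intervalIntegral.continuous_primitive hrint T2
    have : Continuous fun t => Real.exp (-(∫ u in T2..t, r u)) :=
      Real.continuous_exp.comp h1.neg
    convert this using 1
    funext t
    rw [hgexp t, intervalIntegral.integral_symm]
  have hgint : ∀ a b : ℝ, IntervalIntegrable g volume a b := fun a b =>
    hgcont.intervalIntegrable a b
  have hgpos : ∀ t, 0 < g t := fun t => by rw [hgexp]; exact Real.exp_pos _
  -- g is antitone
  have hganti : ∀ ⦃a b : ℝ⦄, a ≤ b → g b ≤ g a := by
    intro a b hab
    rw [hgexp, hgexp]
    apply Real.exp_le_exp.2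
    have hsplit : (∫ u in a..b, r u) + (∫ u in b..T2, r u) = ∫ u in a..T2, r u :=
      intervalIntegral.integral_add_adjacent_intervals (hrint a b) (hrint b T2)
    have hnn : 0 ≤ ∫ u in a..b, r u :=
      intervalIntegral.integral_nonneg hab (fun u _ => hr0 u)
    linarith
  -- key algebraic fact
  have hkey : s2 * (T2 - T1) ≤ (s1 - s2) * (T1 - T0) := by nlinarith
  have hs1s2 : 0 < s1 - s2 := by nlinarith
  -- lower bound for the first integral
  have hI1 : (T1 - T0) * g T1 ≤ ∫ t in T0..T1, g t := by
    have := intervalIntegral.integral_mono_on h01.le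
      (intervalIntegrable_const (c := g T1)) (hgint T0 T1)
      (fun x hx => hganti hx.2)
    simpa [smul_eq_mul] using this
  -- upper bound for the second integral, for T1 ≤ t ≤ T2
  have hI2 : ∀ t, T1 ≤ t → t ≤ T2 → (∫ u in T1..t, g u) ≤ (t - T1) * g T1 := by
    intro t h1t ht2
    have := intervalIntegral.integral_mono_on h1t (hgint T1 t)
      (intervalIntegrable_const (c := g T1))
      (fun x hx => hganti hx.1)
    simpa [smul_eq_mul] using this
  -- main inequality: for T1 ≤ t ≤ T2
  have hmain : ∀ t, T1 ≤ t → t ≤ T2 →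
      s2 * (∫ u in T1..t, g u) ≤ (s1 - s2) * ∫ u in T0..T1, g u := by
    intro t h1t ht2
    have h2 : s2 * (∫ u in T1..t, g u) ≤ s2 * ((t - T1) * g T1) :=
      mul_le_mul_of_nonneg_left (hI2 t h1t ht2) hs2.le
    have h3 : s2 * ((t - T1) * g T1) ≤ s2 * ((T2 - T1) * g T1) := by
      have h := (hgpos T1).le
      nlinarith [mul_nonneg (mul_nonneg hs2.le h) (sub_nonneg.2 ht2)]
    have h4 : s2 * ((T2 - T1) * g T1) ≤ (s1 - s2) * ((T1 - T0) * g T1) := by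
      have h := (hgpos T1).le
      nlinarith [mul_le_mul_of_nonneg_right hkey h]
    have h5 : (s1 - s2) * ((T1 - T0) * g T1) ≤ (s1 - s2) * ∫ u in T0..T1, g u :=
      mul_le_mul_of_nonneg_left hI1 hs1s2.le
    linarith
  -- strict positivity of first-term value for T0 < τ ≤ T1
  have hcase1 : ∀ τ, T0 < τ → τ ≤ T1 → 0 < X τ := by
    intro τ h0τ hτ1
    have hmin1 : min τ T1 = τ := min_eq_left hτ1
    have hmin2 : min τ T2 = τ := min_eq_left (hτ1.trans h12.le)
    have hmax : max T1 τ = T1 := max_eq_left hτ1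
    have hif : ¬(T1 < τ ∧ τ ≤ T2) := fun h => absurd h.1 (not_lt.2 hτ1)
    rw [hX τ, hmin1, hmin2, hmax, if_neg hif,
      intervalIntegral.integral_same]
    have hpos : 0 < ∫ t in T0..τ, g t :=
      intervalIntegral.intervalIntegral_pos_of_pos (hgint T0 τ) (fun x => hgpos x) h0τ
    have : 0 < (s1 - s2) * ∫ t in T0..τ, g t := mul_pos hs1s2 hpos
    simpa using this
  have hcase2 : ∀ τ, T1 < τ → τ ≤ T2 → L τ * B τ T2 ≤ X τ := by
    intro τ h1τ hτ2
    have hmin1 : min τ T1 = T1 := min_eq_right h1τ.le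
    have hmin2 : min τ T2 = τ := min_eq_left hτ2
    have hmax : max T1 τ = τ := max_eq_right h1τ.le
    rw [hX τ, hmin1, hmin2, hmax, if_pos ⟨h1τ, hτ2⟩]
    have := hmain τ h1τ.le hτ2
    linarith
  have hcase3 : ∀ τ, T2 < τ → 0 ≤ X τ := by
    intro τ h2τ
    have hmin1 : min τ T1 = T1 := min_eq_right (h12.le.trans h2τ.le)
    have hmin2 : min τ T2 = T2 := min_eq_right h2τ.le
    have hmax : max T1 T2 = T2 := max_eq_right h12.le
    have hif : ¬(T1 < τ ∧ τ ≤ T2) := fun h => absurd h.2 (not_le.2 h2τ)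
    rw [hX τ, hmin1, hmin2, hmax, if_neg hif]
    have := hmain T2 h12.le le_rfl
    linarith
  refine ⟨?_, hcase1, hcase2⟩
  intro τ h0τ
  rcases le_or_gt τ T1 with h | h
  · exact (hcase1 τ h0τ h).le
  · rcases le_or_gt τ T2 with h' | h'
    · have := hcase2 τ h h'
      have hLB : 0 ≤ L τ * B τ T2 := mul_nonneg (hL τ) (hgpos τ).le
      linarith
    · exact hcase3 τ h'
end

section
/- Let r : ℝ → ℝ be locally integrable with r(u) ≥ 0 for all u, and set B(t,T) := exp(∫_t^T r(u) du). Let T0 < T1 ≤ τ ≤ T2 be real numbers and let s1 ≥ s2 ≥ 0 be real numbers. Then (s1 − s2)·∫_{T0}^{T1} B(t,T2) dt − s2·∫_{T1}^{τ} B(t,T2) dt ≥ (s1·(T1 − T0) − s2·(T2 − T0))·B(T1,T2). -/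
/-!
With `g t := B t T2`, nonnegativity of `r` makes `g` antitone and positive. Hence
`∫_{T0}^{T1} g ≥ (T1 - T0) g(T1)` and `∫_{T1}^{τ} g ≤ (τ - T1) g(T1)`, so the left-hand side is at
least `(s1 (T1 - T0) - s2 (τ - T0)) g(T1)`, and `τ ≤ T2` finishes.
-/

open MeasureTheory

theorem antitone_intervalIntegral_left {r : ℝ → ℝ} (hr : LocallyIntegrable r)
    (hr0 : ∀ u, 0 ≤ r u) (T : ℝ) : Antitone fun t => ∫ u in t..T, r u := by
  intro a b hab
  have hri : ∀ a b : ℝ, IntervalIntegrable r volume a b := fun a b =>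
    (hr.integrableOn_isCompact isCompact_uIcc).intervalIntegrable
  have hsplit := intervalIntegral.integral_add_adjacent_intervals (hri a b) (hri b T)
  have hnonneg : 0 ≤ ∫ u in a..b, r u := intervalIntegral.integral_nonneg hab fun u _ => hr0 u
  dsimp only
  linarith

theorem Antitone.mul_sub_le_intervalIntegral {g : ℝ → ℝ} (hg : Antitone g) {a b : ℝ}
    (hab : a ≤ b) : (b - a) * g b ≤ ∫ x in a..b, g x := by
  simpa using intervalIntegral.integral_mono_on (μ := volume) hab intervalIntegrable_const
    hg.intervalIntegrable fun x hx => hg hx.2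

theorem Antitone.intervalIntegral_le_mul_sub {g : ℝ → ℝ} (hg : Antitone g) {a b : ℝ}
    (hab : a ≤ b) : ∫ x in a..b, g x ≤ (b - a) * g a := by
  simpa using intervalIntegral.integral_mono_on (μ := volume) hab hg.intervalIntegrable
    intervalIntegrable_const fun x hx => hg hx.1

theorem Antitone.spread_bound {g : ℝ → ℝ} (hg : Antitone g) {T0 T1 τ T2 : ℝ}
    (hg0 : 0 ≤ g T1) (h01 : T0 ≤ T1) (h1τ : T1 ≤ τ) (hτ2 : τ ≤ T2)
    {s1 s2 : ℝ} (hs : s2 ≤ s1) (hs2 : 0 ≤ s2) :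
    (s1 * (T1 - T0) - s2 * (T2 - T0)) * g T1 ≤
      (s1 - s2) * (∫ t in T0..T1, g t) - s2 * (∫ t in T1..τ, g t) := by
  have h_left := mul_le_mul_of_nonneg_left (hg.mul_sub_le_intervalIntegral h01)
    (sub_nonneg.2 hs)
  have h_right := mul_le_mul_of_nonneg_left (hg.intervalIntegral_le_mul_sub h1τ) hs2
  have h_tail : s2 * (τ - T0) * g T1 ≤ s2 * (T2 - T0) * g T1 := by gcongr
  linarith

/-- Key inequality in the proof of the No-arbitrage condition for continuously paid CDS
spreads, with nonnegative short rate `r` and accrual factor `B(t,T) = exp(∫_t^T r)`. -/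
theorem stmt_1
    (r : ℝ → ℝ) (hr : LocallyIntegrable r) (hr0 : ∀ u, 0 ≤ r u)
    (B : ℝ → ℝ → ℝ) (hB : ∀ t T, B t T = Real.exp (∫ u in t..T, r u))
    (T0 T1 τ T2 : ℝ) (h01 : T0 < T1) (h1τ : T1 ≤ τ) (hτ2 : τ ≤ T2)
    (s1 s2 : ℝ) (hs : s2 ≤ s1) (hs2 : 0 ≤ s2) :
    (s1 * (T1 - T0) - s2 * (T2 - T0)) * B T1 T2 ≤
      (s1 - s2) * (∫ t in T0..T1, B t T2) - s2 * (∫ t in T1..τ, B t T2) := by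
  have hanti : Antitone fun t => B t T2 := by
    simpa only [hB, Function.comp_def] using
      Real.exp_monotone.comp_antitone (antitone_intervalIntegral_left hr hr0 T2)
  exact hanti.spread_bound (by rw [hB]; positivity) h01.le h1τ hτ2 hs hs2
end

section
/- Let r : ℝ → ℝ be locally integrable with r(u) ≥ 0 for all u, and set B(t,T) := exp(∫_t^T r(u) du). Let T0 < T1 < T2 and let T0 = t_0 < t_1 < ⋯ < t_{n1} = T1 < t_{n1+1} < ⋯ < t_{n2} = T2 be payment dates. Let s1 ≥ s2 ≥ 0 be real numbers and let τ satisfy T1 < τ ≤ T2. Then (s1 − s2)·∑_{i=0}^{n1−1} (min(τ,t_{i+1}) − min(τ,t_i))·B(t_{i+1},T2) − s2·∑_{i=n1}^{n2−1} (min(τ,t_{i+1}) − min(τ,t_i))·B(t_{i+1},T2) ≥ (s1·(T1 − T0) − s2·(T2 − T0))·B(T1,T2). -/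
/-!
Since `r ≥ 0`, the accrual factor `B(·, T2)` is antitone. Before `T1 < τ` there is no default,
so the fee increments on `[T0, T1]` add up to `T1 - T0` and each is accrued by at least
`B(T1, T2)`; after `T1` the increments are nonnegative, telescope to `min τ T2 - T1 ≤ T2 - T1`,
and each is accrued by at most `B(T1, T2)`. Weighting the two bounds by `s1 - s2 ≥ 0` and
`s2 ≥ 0` gives the inequality.
-/

open MeasureTheory Finset

theorem antitone_exp_integral_left {r : ℝ → ℝ} (hr : LocallyIntegrable r) (hr0 : ∀ u, 0 ≤ r u)
    (T : ℝ) : Antitone fun a ↦ Real.exp (∫ u in a..T, r u) := by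
  intro a b hab
  have hint : ∀ c d : ℝ, IntervalIntegrable r volume c d := fun c d ↦
    (hr.integrableOn_isCompact isCompact_uIcc).intervalIntegrable
  have hsplit := intervalIntegral.integral_add_adjacent_intervals (hint a b) (hint b T)
  have hnonneg : 0 ≤ ∫ u in a..b, r u := intervalIntegral.integral_nonneg hab fun u _ ↦ hr0 u
  exact Real.exp_le_exp.2 (by linarith)

section IncrementSums

variable {g v : ℕ → ℝ} {m n : ℕ} {c : ℝ}

theorem sum_Ico_sub_mul_le (hmn : m ≤ n) (hg : ∀ i ∈ Ico m n, g i ≤ g (i + 1))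
    (hv : ∀ i ∈ Ico m n, v i ≤ c) :
    ∑ i ∈ Ico m n, (g (i + 1) - g i) * v i ≤ (g n - g m) * c := by
  calc ∑ i ∈ Ico m n, (g (i + 1) - g i) * v i
      ≤ ∑ i ∈ Ico m n, (g (i + 1) - g i) * c :=
        sum_le_sum fun i hi ↦ mul_le_mul_of_nonneg_left (hv i hi) (sub_nonneg.2 (hg i hi))
    _ = (g n - g m) * c := by rw [← sum_mul, sum_Ico_sub g hmn]

theorem le_sum_Ico_sub_mul (hmn : m ≤ n) (hg : ∀ i ∈ Ico m n, g i ≤ g (i + 1))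
    (hv : ∀ i ∈ Ico m n, c ≤ v i) :
    (g n - g m) * c ≤ ∑ i ∈ Ico m n, (g (i + 1) - g i) * v i := by
  calc (g n - g m) * c = ∑ i ∈ Ico m n, (g (i + 1) - g i) * c := by
        rw [← sum_mul, sum_Ico_sub g hmn]
    _ ≤ ∑ i ∈ Ico m n, (g (i + 1) - g i) * v i :=
        sum_le_sum fun i hi ↦ mul_le_mul_of_nonneg_left (hv i hi) (sub_nonneg.2 (hg i hi))

end IncrementSums

theorem stmt_2_general
    (r : ℝ → ℝ) (hr : LocallyIntegrable r) (hr0 : ∀ u, 0 ≤ r u)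
    (B : ℝ → ℝ → ℝ) (hB : ∀ t T, B t T = Real.exp (∫ u in t..T, r u))
    (T0 T1 T2 : ℝ)
    (t : ℕ → ℝ) (n1 n2 : ℕ) (hn12 : n1 < n2)
    (ht : ∀ i < n2, t i < t (i + 1))
    (ht0 : t 0 = T0) (htn1 : t n1 = T1) (htn2 : t n2 = T2)
    (s1 s2 : ℝ) (hs : s2 ≤ s1) (hs2 : 0 ≤ s2)
    (τ : ℝ) (hτ1 : T1 < τ) :
    (s1 * (T1 - T0) - s2 * (T2 - T0)) * B T1 T2 ≤
      (s1 - s2) * ∑ i ∈ range n1, (min τ (t (i + 1)) - min τ (t i)) * B (t (i + 1)) T2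
        - s2 * ∑ i ∈ Ico n1 n2, (min τ (t (i + 1)) - min τ (t i)) * B (t (i + 1)) T2 := by
  have hBanti : Antitone fun a ↦ B a T2 := by
    simpa only [hB] using antitone_exp_integral_left hr hr0 T2
  have ht_mono : MonotoneOn t (Set.Iic n2) :=
    monotoneOn_of_le_add_one Set.ordConnected_Iic fun i _ _ hi ↦ (ht i hi).le
  have ht_le : ∀ i j, i ≤ j → j ≤ n2 → t i ≤ t j := fun i j hij hj ↦
    ht_mono (Set.mem_Iic.2 (hij.trans hj)) (Set.mem_Iic.2 hj) hij
  have hT01 : T0 ≤ T1 := ht0 ▸ htn1 ▸ ht_le 0 n1 n1.zero_le hn12.le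
  have hg : ∀ i < n2, min τ (t i) ≤ min τ (t (i + 1)) := fun i hi ↦
    min_le_min_left τ (ht i hi).le
  have hS1 : (T1 - T0) * B T1 T2 ≤
      ∑ i ∈ range n1, (min τ (t (i + 1)) - min τ (t i)) * B (t (i + 1)) T2 := by
    have := le_sum_Ico_sub_mul (g := fun i ↦ min τ (t i)) (v := fun i ↦ B (t (i + 1)) T2)
      (c := B T1 T2) n1.zero_le (fun i hi ↦ hg i ((mem_Ico.1 hi).2.trans hn12))
      (fun i hi ↦ hBanti (htn1 ▸ ht_le (i + 1) n1 (mem_Ico.1 hi).2 hn12.le))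
    rwa [← range_eq_Ico, ht0, htn1, min_eq_right hτ1.le, min_eq_right (hT01.trans hτ1.le)] at this
  have hS2 : ∑ i ∈ Ico n1 n2, (min τ (t (i + 1)) - min τ (t i)) * B (t (i + 1)) T2 ≤
      (T2 - T1) * B T1 T2 := by
    have := sum_Ico_sub_mul_le (g := fun i ↦ min τ (t i)) (v := fun i ↦ B (t (i + 1)) T2)
      (c := B T1 T2) hn12.le (fun i hi ↦ hg i (mem_Ico.1 hi).2)
      (fun i hi ↦ hBanti <| htn1 ▸
        ht_le n1 (i + 1) (Nat.le_succ_of_le (mem_Ico.1 hi).1) (mem_Ico.1 hi).2)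
    rw [htn2, htn1, min_eq_right hτ1.le] at this
    exact this.trans (mul_le_mul_of_nonneg_right (by linarith [min_le_right τ T2])
      (hB T1 T2 ▸ (Real.exp_pos _).le))
  linarith [mul_le_mul_of_nonneg_left hS1 (sub_nonneg.2 hs), mul_le_mul_of_nonneg_left hS2 hs2]

/-- Discrete-payment case in the proof of the No-arbitrage condition
`(T1−T0)·s(T0,T1) < (T2−T0)·s(T0,T2)`: value at `T2` of the net protection payments of the
paired strategy, for default time `T1 < τ ≤ T2`, with payment dates
`T0 = t 0 < t 1 < ⋯ < t n1 = T1 < ⋯ < t n2 = T2`. -/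
theorem stmt_2
    (r : ℝ → ℝ) (hr : LocallyIntegrable r) (hr0 : ∀ u, 0 ≤ r u)
    (B : ℝ → ℝ → ℝ) (hB : ∀ t T, B t T = Real.exp (∫ u in t..T, r u))
    (T0 T1 T2 : ℝ) (h01 : T0 < T1) (h12 : T1 < T2)
    (t : ℕ → ℝ) (n1 n2 : ℕ) (hn1 : 0 < n1) (hn12 : n1 < n2)
    (ht : ∀ i < n2, t i < t (i + 1))
    (ht0 : t 0 = T0) (htn1 : t n1 = T1) (htn2 : t n2 = T2)
    (s1 s2 : ℝ) (hs : s2 ≤ s1) (hs2 : 0 ≤ s2)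
    (τ : ℝ) (hτ1 : T1 < τ) (hτ2 : τ ≤ T2) :
    (s1 * (T1 - T0) - s2 * (T2 - T0)) * B T1 T2 ≤
      (s1 - s2) * ∑ i ∈ range n1, (min τ (t (i + 1)) - min τ (t i)) * B (t (i + 1)) T2
        - s2 * ∑ i ∈ Ico n1 n2, (min τ (t (i + 1)) - min τ (t i)) * B (t (i + 1)) T2 :=
  stmt_2_general r hr hr0 B hB T0 T1 T2 t n1 n2 hn12 ht ht0 htn1 htn2 s1 s2 hs hs2 τ hτ1
end

section
/- Fix T0 ∈ ℝ. Let q : ℝ → ℝ be antitone (nonincreasing) with q(t) > 0 for all t, let P : ℝ → ℝ be continuous with P(t) > 0 for all t, and let N : ℝ → ℝ be nondecreasing with N(T) ≥ 0 for all T. For T > T0 define the fair CDS spread s(T) := N(T) / ∫_{T0}^T P(t)·q(t) dt. Then the function T ↦ (∫_{T0}^T P(t) dt)·s(T) is nondecreasing on (T0, ∞). -/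
open MeasureTheory

/-- Annuity-weighted fair CDS spread `A(T)·s(T)` is nondecreasing in the maturity `T`,
where `A(T) = ∫_{T0}^T P` is the standardized risk-free annuity and
`s(T) = N(T) / ∫_{T0}^T P·q` the fair spread. -/
theorem stmt_4
    (T0 : ℝ) (q P N : ℝ → ℝ)
    (hq : Antitone q) (hq0 : ∀ t, 0 < q t)
    (hP : Continuous P) (hP0 : ∀ t, 0 < P t)
    (hN : Monotone N) (hN0 : ∀ T, 0 ≤ N T)
    (s : ℝ → ℝ) (hs : ∀ T, T0 < T → s T = N T / ∫ t in T0..T, P t * q t) :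
    MonotoneOn (fun T => (∫ t in T0..T, P t) * s T) (Set.Ioi T0) := by
  have hPint : ∀ a b : ℝ, IntervalIntegrable P volume a b :=
    fun a b => hP.intervalIntegrable a b
  have hPqint : ∀ a b : ℝ, IntervalIntegrable (fun t => P t * q t) volume a b := by
    intro a b
    exact (hq.intervalIntegrable).continuousOn_mul hP.continuousOn
  intro T1 hT1 T2 hT2 h12
  simp only [Set.mem_Ioi] at hT1 hT2
  simp only []
  rw [hs T1 hT1, hs T2 hT2]
  set A1 := ∫ t in T0..T1, P t with hA1def
  set A2 := ∫ t in T0..T2, P t with hA2def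
  set Ad1 := ∫ t in T0..T1, P t * q t with hAd1def
  set Ad2 := ∫ t in T0..T2, P t * q t with hAd2def
  set B := ∫ t in T1..T2, P t with hBdef
  set Bd := ∫ t in T1..T2, P t * q t with hBddef
  have hA2split : A1 + B = A2 :=
    intervalIntegral.integral_add_adjacent_intervals (hPint T0 T1) (hPint T1 T2)
  have hAd2split : Ad1 + Bd = Ad2 :=
    intervalIntegral.integral_add_adjacent_intervals (hPqint T0 T1) (hPqint T1 T2)
  have hA1pos : 0 < A1 :=
    intervalIntegral.intervalIntegral_pos_of_pos_on (hPint T0 T1)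
      (fun x _ => hP0 x) hT1
  have hAd1pos : 0 < Ad1 :=
    intervalIntegral.intervalIntegral_pos_of_pos_on (hPqint T0 T1)
      (fun x _ => mul_pos (hP0 x) (hq0 x)) hT1
  have hBnonneg : 0 ≤ B :=
    intervalIntegral.integral_nonneg h12 (fun x _ => (hP0 x).le)
  have hBdnonneg : 0 ≤ Bd :=
    intervalIntegral.integral_nonneg h12 (fun x _ => (mul_pos (hP0 x) (hq0 x)).le)
  have hAd2pos : 0 < Ad2 := by
    rw [← hAd2split]; linarith
  -- Bd ≤ q T1 * B
  have hBd_le : Bd ≤ q T1 * B := by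
    have : Bd ≤ ∫ t in T1..T2, q T1 * P t := by
      apply intervalIntegral.integral_mono_on h12 (hPqint T1 T2)
        ((hPint T1 T2).const_mul _)
      intro x hx
      have : q x ≤ q T1 := hq hx.1
      have := mul_le_mul_of_nonneg_left this (hP0 x).le
      linarith [this]
    simpa [intervalIntegral.integral_const_mul] using this
  -- q T1 * A1 ≤ Ad1
  have hAd1_ge : q T1 * A1 ≤ Ad1 := by
    have : (∫ t in T0..T1, q T1 * P t) ≤ Ad1 := by
      apply intervalIntegral.integral_mono_on hT1.le ((hPint T0 T1).const_mul _)
        (hPqint T0 T1)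
      intro x hx
      have : q T1 ≤ q x := hq hx.2
      have := mul_le_mul_of_nonneg_left this (hP0 x).le
      linarith [this]
    simpa [intervalIntegral.integral_const_mul] using this
  have key : A1 * Ad2 ≤ A2 * Ad1 := by
    rw [← hA2split, ← hAd2split]
    nlinarith [mul_le_mul_of_nonneg_left hBd_le hA1pos.le,
      mul_le_mul_of_nonneg_right hAd1_ge hBnonneg]
  rw [← mul_div_assoc, ← mul_div_assoc, div_le_div_iff₀ hAd1pos hAd2pos]
  calc A1 * N T1 * Ad2 = (A1 * Ad2) * N T1 := by ring
    _ ≤ (A2 * Ad1) * N T2 := by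
        apply mul_le_mul key (hN h12) (hN0 T1)
        nlinarith [hAd1pos, hA1pos, hBnonneg]
    _ = A2 * N T2 * Ad1 := by ring
end

section
/- Fix T0 ∈ ℝ. Let q : ℝ → ℝ be antitone (nonincreasing) with q(t) > 0 for all t and let P : ℝ → ℝ be continuous with P(t) > 0 for all t. Then for all S, T with T0 < S ≤ T one has (∫_{T0}^S P(t) dt)·(∫_{T0}^T P(t)·q(t) dt) ≤ (∫_{T0}^T P(t) dt)·(∫_{T0}^S P(t)·q(t) dt); that is, the ratio A(T)/A^d(T) of the standardized risk-free annuity A(T) := ∫_{T0}^T P(t) dt to the defaultable standardized annuity A^d(T) := ∫_{T0}^T P(t)·q(t) dt is nondecreasing in T on (T0, ∞). -/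
/-!
Split `[T0, T]` at `S`. Since `q` is nonincreasing, the `P`-weighted average of `q` over
`[T0, S]` is at least `q S`, and over `[S, T]` at most `q S`; cross-multiplying these two
bounds gives the inequality.
-/

open MeasureTheory Set

section
variable {f g : ℝ → ℝ} {a b C : ℝ}

theorem integral_mul_le_const_mul_integral (hab : a ≤ b) (hf : IntervalIntegrable f volume a b)
    (hfg : IntervalIntegrable (fun t => f t * g t) volume a b)
    (hf0 : ∀ t ∈ Icc a b, 0 ≤ f t) (hg : ∀ t ∈ Icc a b, g t ≤ C) :
    ∫ t in a..b, f t * g t ≤ C * ∫ t in a..b, f t := by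
  rw [← intervalIntegral.integral_const_mul]
  refine intervalIntegral.integral_mono_on hab hfg (hf.const_mul C) fun t ht => ?_
  rw [mul_comm C]
  exact mul_le_mul_of_nonneg_left (hg t ht) (hf0 t ht)

theorem const_mul_integral_le_integral_mul (hab : a ≤ b) (hf : IntervalIntegrable f volume a b)
    (hfg : IntervalIntegrable (fun t => f t * g t) volume a b)
    (hf0 : ∀ t ∈ Icc a b, 0 ≤ f t) (hg : ∀ t ∈ Icc a b, C ≤ g t) :
    C * ∫ t in a..b, f t ≤ ∫ t in a..b, f t * g t := by
  rw [← intervalIntegral.integral_const_mul]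
  refine intervalIntegral.integral_mono_on hab (hf.const_mul C) hfg fun t ht => ?_
  rw [mul_comm C]
  exact mul_le_mul_of_nonneg_left (hg t ht) (hf0 t ht)

theorem AntitoneOn.integral_cross_mul_le {b' : ℝ} (hg : AntitoneOn g (Icc a b'))
    (hab : a ≤ b) (hbb' : b ≤ b') (hf : IntervalIntegrable f volume a b')
    (hfg : IntervalIntegrable (fun t => f t * g t) volume a b')
    (hf0 : ∀ t ∈ Icc a b', 0 ≤ f t) :
    (∫ t in a..b, f t) * (∫ t in a..b', f t * g t) ≤
      (∫ t in a..b', f t) * (∫ t in a..b, f t * g t) := by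
  have hab' : a ≤ b' := hab.trans hbb'
  have hsub₁ : uIcc a b ⊆ uIcc a b' := by
    rw [uIcc_of_le hab, uIcc_of_le hab']; exact Icc_subset_Icc_right hbb'
  have hsub₂ : uIcc b b' ⊆ uIcc a b' := by
    rw [uIcc_of_le hbb', uIcc_of_le hab']; exact Icc_subset_Icc_left hab
  have hb : b ∈ Icc a b' := ⟨hab, hbb'⟩
  have head : g b * (∫ t in a..b, f t) ≤ ∫ t in a..b, f t * g t :=
    const_mul_integral_le_integral_mul hab (hf.mono_set hsub₁) (hfg.mono_set hsub₁)
      (fun t ht => hf0 t (Icc_subset_Icc_right hbb' ht))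
      (fun t ht => hg (Icc_subset_Icc_right hbb' ht) hb ht.2)
  have tail : ∫ t in b..b', f t * g t ≤ g b * ∫ t in b..b', f t :=
    integral_mul_le_const_mul_integral hbb' (hf.mono_set hsub₂) (hfg.mono_set hsub₂)
      (fun t ht => hf0 t (Icc_subset_Icc_left hab ht))
      (fun t ht => hg hb (Icc_subset_Icc_left hab ht) ht.1)
  have hA : 0 ≤ ∫ t in a..b, f t :=
    intervalIntegral.integral_nonneg hab fun t ht => hf0 t (Icc_subset_Icc_right hbb' ht)
  have hA' : 0 ≤ ∫ t in b..b', f t :=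
    intervalIntegral.integral_nonneg hbb' fun t ht => hf0 t (Icc_subset_Icc_left hab ht)
  rw [← intervalIntegral.integral_add_adjacent_intervals
      (hf.mono_set hsub₁) (hf.mono_set hsub₂),
    ← intervalIntegral.integral_add_adjacent_intervals
      (hfg.mono_set hsub₁) (hfg.mono_set hsub₂)]
  nlinarith [mul_le_mul_of_nonneg_left tail hA, mul_le_mul_of_nonneg_left head hA']

end

theorem stmt_5_general
    (T0 : ℝ) (q P : ℝ → ℝ)
    (hq : Antitone q)
    (hP : Continuous P) (hP0 : ∀ t, 0 < P t) :
    ∀ S T : ℝ, T0 < S → S ≤ T →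
      (∫ t in T0..S, P t) * (∫ t in T0..T, P t * q t) ≤
        (∫ t in T0..T, P t) * (∫ t in T0..S, P t * q t) := fun _ _ hT0S hST =>
  (hq.antitoneOn _).integral_cross_mul_le hT0S.le hST (hP.intervalIntegrable _ _)
    (hq.intervalIntegrable.continuousOn_mul hP.continuousOn) fun t _ => (hP0 t).le

/-- The ratio `A(T)/A^d(T)` of the standardized risk-free annuity
`A(T) = ∫_{T0}^T P` to the defaultable standardized annuity `A^d(T) = ∫_{T0}^T P·q`
is nondecreasing, in cross-multiplied form. -/
theorem stmt_5
    (T0 : ℝ) (q P : ℝ → ℝ)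
    (hq : Antitone q) (hq0 : ∀ t, 0 < q t)
    (hP : Continuous P) (hP0 : ∀ t, 0 < P t) :
    ∀ S T : ℝ, T0 < S → S ≤ T →
      (∫ t in T0..S, P t) * (∫ t in T0..T, P t * q t) ≤
        (∫ t in T0..T, P t) * (∫ t in T0..S, P t * q t) :=
  stmt_5_general T0 q P hq hP hP0
end

section
/- Fix T0 ∈ ℝ. Let q : ℝ → ℝ be antitone with q(t) > 0 for all t, let P : ℝ → ℝ be continuous, antitone and with P(t) > 0 for all t, and let N : ℝ → ℝ be nondecreasing with N(T) ≥ 0 for all T. For T > T0 define s(T) := N(T) / ∫_{T0}^T P(t)·q(t) dt. Then the function T ↦ (T − T0)·s(T) is nondecreasing on (T0, ∞). -/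
open MeasureTheory Set

/-
The integral `F(x) = ∫_{T0}^x P q` of the antitone density `P q` is concave, so the chord
slopes `F(x) / (x - T0)` decrease and their reciprocals `(x - T0) / F(x)` increase. Then
`(T - T0) s(T) = N(T) · (T - T0) / F(T)` is a product of two nonnegative nondecreasing functions.
-/

namespace Antitone

variable {f : ℝ → ℝ} {a b x y : ℝ}

theorem intervalIntegral_le_sub_mul (hf : Antitone f) (hab : a ≤ b) :
    ∫ t in a..b, f t ≤ (b - a) * f a := by
  simpa using intervalIntegral.integral_mono_on hab (hf.intervalIntegrable (μ := volume))
    intervalIntegrable_const fun t ht => hf ht.1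

theorem sub_mul_le_intervalIntegral (hf : Antitone f) (hab : a ≤ b) :
    (b - a) * f b ≤ ∫ t in a..b, f t := by
  simpa using intervalIntegral.integral_mono_on hab (intervalIntegrable_const (μ := volume))
    hf.intervalIntegrable fun t ht => hf ht.2

theorem sub_mul_intervalIntegral_le (hf : Antitone f) (hax : a ≤ x) (hxy : x ≤ y) :
    (x - a) * ∫ t in a..y, f t ≤ (y - a) * ∫ t in a..x, f t := by
  have hsplit : ∫ t in a..y, f t = (∫ t in a..x, f t) + ∫ t in x..y, f t :=
    (intervalIntegral.integral_add_adjacent_intervals hf.intervalIntegrable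
      hf.intervalIntegrable).symm
  have hright : (x - a) * ∫ t in x..y, f t ≤ (x - a) * ((y - x) * f x) :=
    mul_le_mul_of_nonneg_left (hf.intervalIntegral_le_sub_mul hxy) (sub_nonneg.mpr hax)
  have hleft : (y - x) * ((x - a) * f x) ≤ (y - x) * ∫ t in a..x, f t :=
    mul_le_mul_of_nonneg_left (hf.sub_mul_le_intervalIntegral hax) (sub_nonneg.mpr hxy)
  rw [hsplit]
  linarith

theorem intervalIntegral_pos (hf : Antitone f) (hf0 : ∀ t, 0 < f t) (hab : a < b) :
    0 < ∫ t in a..b, f t :=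
  intervalIntegral.intervalIntegral_pos_of_pos_on hf.intervalIntegrable (fun t _ => hf0 t) hab

theorem monotoneOn_sub_div_intervalIntegral (hf : Antitone f) (hf0 : ∀ t, 0 < f t) :
    MonotoneOn (fun x => (x - a) / ∫ t in a..x, f t) (Ioi a) := fun _ hx _ hy hxy =>
  (div_le_div_iff₀ (hf.intervalIntegral_pos hf0 hx) (hf.intervalIntegral_pos hf0 hy)).mpr
    (hf.sub_mul_intervalIntegral_le hx.le hxy)

end Antitone

theorem stmt_8_general
    (T0 : ℝ) (q P N : ℝ → ℝ)
    (hq : Antitone q) (hq0 : ∀ t, 0 < q t)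
    (hPa : Antitone P) (hP0 : ∀ t, 0 < P t)
    (hN : Monotone N) (hN0 : ∀ T, 0 ≤ N T)
    (s : ℝ → ℝ) (hs : ∀ T, T0 < T → s T = N T / ∫ t in T0..T, P t * q t) :
    MonotoneOn (fun T => (T - T0) * s T) (Set.Ioi T0) := by
  have hPq : Antitone fun t => P t * q t := fun x y hxy =>
    mul_le_mul (hPa hxy) (hq hxy) (hq0 y).le (hP0 x).le
  have hPq0 : ∀ t, 0 < P t * q t := fun t => mul_pos (hP0 t) (hq0 t)
  have hprod : MonotoneOn (fun T => N T * ((T - T0) / ∫ t in T0..T, P t * q t)) (Ioi T0) :=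
    (hN.monotoneOn _).mul (hPq.monotoneOn_sub_div_intervalIntegral hPq0) (fun T _ => hN0 T)
      fun T hT => div_nonneg (sub_nonneg.mpr hT.le) (hPq.intervalIntegral_pos hPq0 hT).le
  refine hprod.congr fun T hT => ?_
  simp only [hs T hT]
  ring

/-- In a nonnegative-rate environment (nonincreasing bond prices `P`), the
maturity-weighted fair CDS spread `(T − T0)·s(T)` is nondecreasing in the maturity,
where `s(T) = N(T) / ∫_{T0}^T P·q`. -/
theorem stmt_8
    (T0 : ℝ) (q P N : ℝ → ℝ)
    (hq : Antitone q) (hq0 : ∀ t, 0 < q t)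
    (hP : Continuous P) (hPa : Antitone P) (hP0 : ∀ t, 0 < P t)
    (hN : Monotone N) (hN0 : ∀ T, 0 ≤ N T)
    (s : ℝ → ℝ) (hs : ∀ T, T0 < T → s T = N T / ∫ t in T0..T, P t * q t) :
    MonotoneOn (fun T => (T - T0) * s T) (Set.Ioi T0) :=
  stmt_8_general T0 q P N hq hq0 hPa hP0 hN hN0 s hs
end

section
/- Fix T0 ∈ ℝ. Let q : ℝ → ℝ be antitone with q(t) > 0 for all t, let P : ℝ → ℝ be continuous with P(t) > 0 for all t and with P(T) < P(T0) for all T > T0, and let N : ℝ → ℝ be nondecreasing with N(T) ≥ 0 for all T. For T > T0 define s(T) := N(T) / ∫_{T0}^T P(t)·q(t) dt, the forward IRS rate I(T) := (P(T0) − P(T)) / ∫_{T0}^T P(t) dt, and the forward bond price F(T) := P(T)/P(T0). Then the function T ↦ (1 − F(T))·s(T)/I(T) is nondecreasing on (T0, ∞). -/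
open MeasureTheory Set

/-!
After cancelling `P T0 - P T`, the quantity equals `N T / (P T0 * w T)`, where
`w T = (∫_{T0}^T P q) / (∫_{T0}^T P)` is the `P`-weighted average of `q` over `[T0, T]`.
Since `q` is antitone, extending the interval only adds values of `q` no larger than those
already averaged, so `w` is antitone; as `N` is nonnegative and monotone, the quotient is monotone.
-/

section WeightedAverage

variable {f g : ℝ → ℝ}

lemma mul_integral_le_integral_mul_of_antitone (hf : Continuous f) (hf0 : ∀ t, 0 ≤ f t)
    (hg : Antitone g) {u v : ℝ} (huv : u ≤ v) :
    (∫ t in u..v, f t) * g v ≤ ∫ t in u..v, f t * g t := by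
  rw [← intervalIntegral.integral_mul_const]
  exact intervalIntegral.integral_mono_on huv ((hf.intervalIntegrable u v).mul_const _)
    (hg.intervalIntegrable.continuousOn_mul hf.continuousOn)
    fun t ht => mul_le_mul_of_nonneg_left (hg ht.2) (hf0 t)

lemma integral_mul_le_mul_integral_of_antitone (hf : Continuous f) (hf0 : ∀ t, 0 ≤ f t)
    (hg : Antitone g) {u v : ℝ} (huv : u ≤ v) :
    ∫ t in u..v, f t * g t ≤ (∫ t in u..v, f t) * g u := by
  rw [← intervalIntegral.integral_mul_const]
  exact intervalIntegral.integral_mono_on huv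
    (hg.intervalIntegrable.continuousOn_mul hf.continuousOn)
    ((hf.intervalIntegrable u v).mul_const _)
    fun t ht => mul_le_mul_of_nonneg_left (hg ht.1) (hf0 t)

lemma antitoneOn_integral_mul_div_integral (a : ℝ) (hf : Continuous f) (hf0 : ∀ t, 0 < f t)
    (hg : Antitone g) :
    AntitoneOn (fun T => (∫ t in a..T, f t * g t) / ∫ t in a..T, f t) (Ioi a) := by
  intro b hb c _ hbc
  have hfg : ∀ x y, IntervalIntegrable (fun t => f t * g t) volume x y :=
    fun _ _ => hg.intervalIntegrable.continuousOn_mul hf.continuousOn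
  have hf0' : ∀ t, 0 ≤ f t := fun t => (hf0 t).le
  have hpos : ∀ T ∈ Ioi a, 0 < ∫ t in a..T, f t := fun T hT =>
    intervalIntegral.intervalIntegral_pos_of_pos_on (hf.intervalIntegrable a T)
      (fun t _ => hf0 t) hT
  have hsplit : (∫ t in a..b, f t) + (∫ t in b..c, f t) = ∫ t in a..c, f t :=
    intervalIntegral.integral_add_adjacent_intervals
      (hf.intervalIntegrable a b) (hf.intervalIntegrable b c)
  have hsplit_mul : (∫ t in a..b, f t * g t) + (∫ t in b..c, f t * g t)
      = ∫ t in a..c, f t * g t :=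
    intervalIntegral.integral_add_adjacent_intervals (hfg a b) (hfg b c)
  have hlow := mul_integral_le_integral_mul_of_antitone hf hf0' hg hb.le
  have hupp := integral_mul_le_mul_integral_of_antitone hf hf0' hg hbc
  have htail : 0 ≤ ∫ t in b..c, f t := intervalIntegral.integral_nonneg hbc fun t _ => hf0' t
  rw [div_le_div_iff₀ (hpos c (lt_of_lt_of_le hb hbc)) (hpos b hb), ← hsplit, ← hsplit_mul]
  -- both the old average and the new tail are compared with the single value `g b`
  nlinarith [hpos b hb]

end WeightedAverage

/-- No-arbitrage condition in terms of forward bond prices `F(T) = P(T)/P(T0)` and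
forward IRS rates `I(T) = (P(T0) − P(T))/∫_{T0}^T P`: the quantity
`(1 − F(T))·s(T)/I(T)` is nondecreasing in the maturity `T`. -/
theorem stmt_9
    (T0 : ℝ) (q P N : ℝ → ℝ)
    (hq : Antitone q) (hq0 : ∀ t, 0 < q t)
    (hP : Continuous P) (hP0 : ∀ t, 0 < P t)
    (hPT0 : ∀ T, T0 < T → P T < P T0)
    (hN : Monotone N) (hN0 : ∀ T, 0 ≤ N T)
    (s I F : ℝ → ℝ)
    (hs : ∀ T, T0 < T → s T = N T / ∫ t in T0..T, P t * q t)
    (hI : ∀ T, T0 < T → I T = (P T0 - P T) / ∫ t in T0..T, P t)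
    (hF : ∀ T, F T = P T / P T0) :
    MonotoneOn (fun T => (1 - F T) * s T / I T) (Set.Ioi T0) := by
  set w := fun T => (∫ t in T0..T, P t * q t) / ∫ t in T0..T, P t
  have hPq_pos : ∀ T, T0 < T → 0 < ∫ t in T0..T, P t * q t := fun T hT =>
    intervalIntegral.intervalIntegral_pos_of_pos_on
      (hq.intervalIntegrable.continuousOn_mul hP.continuousOn)
      (fun t _ => mul_pos (hP0 t) (hq0 t)) hT
  have hP_pos : ∀ T, T0 < T → 0 < ∫ t in T0..T, P t := fun T hT =>
    intervalIntegral.intervalIntegral_pos_of_pos_on (hP.intervalIntegrable T0 T)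
      (fun t _ => hP0 t) hT
  have hw_pos : ∀ T, T0 < T → 0 < w T := fun T hT => div_pos (hPq_pos T hT) (hP_pos T hT)
  have hrewrite : ∀ T, T0 < T → (1 - F T) * s T / I T = N T / (P T0 * w T) := by
    intro T hT
    rw [hF, hs T hT, hI T hT]
    simp only [w]
    field_simp [sub_ne_zero.2 (hPT0 T hT).ne', (hP0 T0).ne', (hPq_pos T hT).ne',
      (hP_pos T hT).ne']
  intro a ha b hb hab
  dsimp only
  rw [hrewrite a ha, hrewrite b hb]
  exact div_le_div₀ (hN0 b) (hN hab) (mul_pos (hP0 T0) (hw_pos b hb))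
    (mul_le_mul_of_nonneg_left (antitoneOn_integral_mul_div_integral T0 hP hP0 hq ha hb hab)
      (hP0 T0).le)
end

section
/- Let T : ℕ → ℝ be a strictly increasing sequence of tenor dates T_0 < T_1 < T_2 < ⋯. Let q : ℝ → ℝ be antitone with q(t) > 0 for all t, and set Q(T) := ∫_0^T q(u) du. Let P : ℝ → ℝ satisfy P(T_i) > 0 for all i ≥ 1, and let N : ℝ → ℝ be nondecreasing with N(T) ≥ 0 for all T. For n ≥ 1 define A_n := ∑_{i=1}^n (T_i − T_{i−1})·P(T_i), A^d_n := ∑_{i=1}^n (Q(T_i) − Q(T_{i−1}))·P(T_i), and s_n := N(T_n)/A^d_n. Then the sequence n ↦ A_n·s_n is nondecreasing on n ≥ 1. -/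
open MeasureTheory Finset

private lemma int_lb {q : ℝ → ℝ} (hq : Antitone q) {a b : ℝ} (hab : a ≤ b) :
    (b - a) * q b ≤ ∫ u in a..b, q u := by
  have h := intervalIntegral.integral_mono_on (μ := volume) (f := fun _ => q b) (g := q)
    hab (intervalIntegrable_const) hq.intervalIntegrable
    (fun x hx => hq hx.2)
  simpa [smul_eq_mul] using h

private lemma int_ub {q : ℝ → ℝ} (hq : Antitone q) {a b : ℝ} (hab : a ≤ b) :
    (∫ u in a..b, q u) ≤ (b - a) * q a := by
  have h := intervalIntegral.integral_mono_on (μ := volume) (f := q) (g := fun _ => q a)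
    hab hq.intervalIntegrable (intervalIntegrable_const)
    (fun x hx => hq hx.1)
  simpa [smul_eq_mul] using h

private lemma cross_ineq {q : ℝ → ℝ} (hq : Antitone q) {a b c d : ℝ}
    (hab : a ≤ b) (hbc : b ≤ c) (hcd : c ≤ d) :
    (∫ u in c..d, q u) * (b - a) ≤ (d - c) * ∫ u in a..b, q u := by
  have h1 := int_ub hq hcd
  have h2 := int_lb hq hab
  have h3 : q c ≤ q b := hq hbc
  have h4 : (0:ℝ) ≤ b - a := by linarith
  have h5 : (0:ℝ) ≤ d - c := by linarith
  nlinarith [mul_le_mul_of_nonneg_right h1 h4, mul_le_mul_of_nonneg_left h2 h5,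
    mul_le_mul_of_nonneg_right (mul_le_mul_of_nonneg_left h3 h5) h4]

/-- Discretely-paid CDS: the annuity-weighted fair spread `A_n·s_n` is nondecreasing in
`n ≥ 1`, where `A_n = ∑_{i=1}^n (T_i − T_{i−1})P(T_i)` is the discrete standardized
annuity, `A^d_n = ∑_{i=1}^n (Q(T_i) − Q(T_{i−1}))P(T_i)` the defaultable one with
`Q(T) = ∫_0^T q`, and `s_n = N(T_n)/A^d_n`. -/
theorem stmt_10
    (T : ℕ → ℝ) (hT : StrictMono T)
    (q : ℝ → ℝ) (hq : Antitone q) (hq0 : ∀ t, 0 < q t)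
    (Q : ℝ → ℝ) (hQ : ∀ x, Q x = ∫ u in (0:ℝ)..x, q u)
    (P : ℝ → ℝ) (hP0 : ∀ i, 1 ≤ i → 0 < P (T i))
    (N : ℝ → ℝ) (hN : Monotone N) (hN0 : ∀ x, 0 ≤ N x)
    (A Ad s : ℕ → ℝ)
    (hA : ∀ n, A n = ∑ i ∈ Icc 1 n, (T i - T (i - 1)) * P (T i))
    (hAd : ∀ n, Ad n = ∑ i ∈ Icc 1 n, (Q (T i) - Q (T (i - 1))) * P (T i))
    (hs : ∀ n, 1 ≤ n → s n = N (T n) / Ad n) :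
    ∀ n m : ℕ, 1 ≤ n → n ≤ m → A n * s n ≤ A m * s m := by
  -- Q difference as an interval integral
  have hQd : ∀ a b : ℝ, Q b - Q a = ∫ u in a..b, q u := by
    intro a b
    rw [hQ, hQ]
    exact intervalIntegral.integral_interval_sub_left hq.intervalIntegrable hq.intervalIntegrable
  -- positivity of Q increments along tenor dates
  have hQpos : ∀ i : ℕ, 1 ≤ i → 0 < Q (T i) - Q (T (i - 1)) := by
    intro i hi
    have hlt : T (i - 1) < T i := hT (Nat.sub_lt hi one_pos)
    have := int_lb hq hlt.le
    have := hq0 (T i)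
    rw [hQd]
    nlinarith
  -- positivity of T increments
  have hTpos : ∀ i : ℕ, 1 ≤ i → 0 < T i - T (i - 1) := by
    intro i hi
    have hlt : T (i - 1) < T i := hT (Nat.sub_lt hi one_pos)
    linarith
  have hAdpos : ∀ n : ℕ, 1 ≤ n → 0 < Ad n := by
    intro n hn
    rw [hAd]
    apply Finset.sum_pos
    · intro i hi
      exact mul_pos (hQpos i (mem_Icc.1 hi).1) (hP0 i (mem_Icc.1 hi).1)
    · exact ⟨1, mem_Icc.2 ⟨le_refl 1, hn⟩⟩
  have hApos : ∀ n : ℕ, 1 ≤ n → 0 < A n := by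
    intro n hn
    rw [hA]
    apply Finset.sum_pos
    · intro i hi
      exact mul_pos (hTpos i (mem_Icc.1 hi).1) (hP0 i (mem_Icc.1 hi).1)
    · exact ⟨1, mem_Icc.2 ⟨le_refl 1, hn⟩⟩
  -- key cross inequality at the level of partial sums
  have hkey : ∀ n : ℕ, 1 ≤ n → A n * Ad (n + 1) ≤ A (n + 1) * Ad n := by
    intro n hn
    have hAstep : A (n + 1) = A n + (T (n + 1) - T n) * P (T (n + 1)) := by
      rw [hA, hA, Finset.sum_Icc_succ_top (by omega)]
      simp
    have hAdstep : Ad (n + 1) = Ad n + (Q (T (n + 1)) - Q (T n)) * P (T (n + 1)) := by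
      rw [hAd, hAd, Finset.sum_Icc_succ_top (by omega)]
      simp
    rw [hAstep, hAdstep]
    have hmain : A n * ((Q (T (n + 1)) - Q (T n)) * P (T (n + 1))) ≤
        (T (n + 1) - T n) * P (T (n + 1)) * Ad n := by
      rw [hA, hAd, Finset.sum_mul, Finset.mul_sum]
      apply Finset.sum_le_sum
      intro i hi
      obtain ⟨hi1, hin⟩ := mem_Icc.1 hi
      have hPi := hP0 i hi1
      have hPn1 := hP0 (n + 1) (by omega)
      have hc : (Q (T (n + 1)) - Q (T n)) * (T i - T (i - 1)) ≤
          (T (n + 1) - T n) * (Q (T i) - Q (T (i - 1))) := by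
        rw [hQd (T n) (T (n + 1)), hQd (T (i - 1)) (T i)]
        exact cross_ineq hq (hT (Nat.sub_lt hi1 one_pos)).le
          (hT.monotone (by omega)) (hT (by omega)).le
      calc (T i - T (i - 1)) * P (T i) * ((Q (T (n + 1)) - Q (T n)) * P (T (n + 1)))
          = ((Q (T (n + 1)) - Q (T n)) * (T i - T (i - 1))) * (P (T i) * P (T (n + 1))) := by ring
        _ ≤ ((T (n + 1) - T n) * (Q (T i) - Q (T (i - 1)))) * (P (T i) * P (T (n + 1))) := by
            apply mul_le_mul_of_nonneg_right hc (by positivity)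
        _ = (T (n + 1) - T n) * P (T (n + 1)) * ((Q (T i) - Q (T (i - 1))) * P (T i)) := by ring
    nlinarith [hmain]
  -- single step for the full quantity
  have hstep : ∀ n : ℕ, 1 ≤ n → A n * s n ≤ A (n + 1) * s (n + 1) := by
    intro n hn
    rw [hs n hn, hs (n + 1) (by omega)]
    have h1 : A n * (N (T n) / Ad n) = N (T n) * (A n / Ad n) := by ring
    have h2 : A (n + 1) * (N (T (n + 1)) / Ad (n + 1)) =
        N (T (n + 1)) * (A (n + 1) / Ad (n + 1)) := by ring
    rw [h1, h2]
    have hr : A n / Ad n ≤ A (n + 1) / Ad (n + 1) := by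
      rw [div_le_div_iff₀ (hAdpos n hn) (hAdpos (n + 1) (by omega))]
      exact hkey n hn
    exact mul_le_mul (hN (hT.monotone (by omega))) hr
      (le_of_lt (div_pos (hApos n hn) (hAdpos n hn))) (hN0 _)
  intro n m hn hnm
  induction m, hnm using Nat.le_induction with
  | base => exact le_refl _
  | succ m hm ih => exact le_trans ih (hstep m (by omega))
end

section
/- Let T : ℕ → ℝ be a strictly increasing sequence of tenor dates T_0 < T_1 < T_2 < ⋯. Let q : ℝ → ℝ be antitone with q(t) > 0 for all t and set Q(T) := ∫_0^T q(u) du. Let P : ℝ → ℝ satisfy P(T_i) > 0 for all i ≥ 1. For n ≥ 1 define A_n := ∑_{i=1}^n (T_i − T_{i−1})·P(T_i) and A^d_n := ∑_{i=1}^n (Q(T_i) − Q(T_{i−1}))·P(T_i). Then for every n ≥ 1, A_{n+1}·A^d_n ≥ A_n·A^d_{n+1}; that is, the ratio A_n/A^d_n is nondecreasing in n. -/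
/-!
Over any two intervals `[a, b]` and `[c, d]` with `b ≤ c`, the mean of an antitone `q` over the
later one is at most `q b`, which is at most its mean over the earlier one. Applied to
`[T (i-1), T i]` and `[T n, T (n+1)]`, this says each term of `A^d_n` dominates the matching
term of `A_n` scaled by `(Q (T (n+1)) - Q (T n)) / (T (n+1) - T n)`; summing with the weights
`P (T i) > 0` and appending the `(n+1)`-st terms gives the cross-multiplied inequality.
-/

open MeasureTheory Finset

namespace Antitone

variable {f : ℝ → ℝ} {a b c d : ℝ}

theorem mul_sub_le_intervalIntegral_s11 (hf : Antitone f) (hab : a ≤ b) :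
    f b * (b - a) ≤ ∫ u in a..b, f u := by
  have h := intervalIntegral.integral_mono_on (μ := volume) hab
    intervalIntegrable_const hf.intervalIntegrable fun u hu => hf hu.2
  rwa [intervalIntegral.integral_const, smul_eq_mul, mul_comm] at h

theorem intervalIntegral_le_mul_sub_s11 (hf : Antitone f) (hab : a ≤ b) :
    ∫ u in a..b, f u ≤ f a * (b - a) := by
  have h := intervalIntegral.integral_mono_on (μ := volume) hab
    hf.intervalIntegrable intervalIntegrable_const fun u hu => hf hu.1
  rwa [intervalIntegral.integral_const, smul_eq_mul, mul_comm] at h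

theorem mul_intervalIntegral_le_of_le (hf : Antitone f) (hab : a ≤ b) (hbc : b ≤ c)
    (hcd : c ≤ d) :
    (b - a) * ∫ u in c..d, f u ≤ (d - c) * ∫ u in a..b, f u :=
  calc (b - a) * ∫ u in c..d, f u
      ≤ (b - a) * (f b * (d - c)) := by
        gcongr
        exact (hf.intervalIntegral_le_mul_sub_s11 hcd).trans (by gcongr; exact hf hbc)
    _ = (d - c) * (f b * (b - a)) := by ring
    _ ≤ (d - c) * ∫ u in a..b, f u :=
        mul_le_mul_of_nonneg_left (hf.mul_sub_le_intervalIntegral_s11 hab) (sub_nonneg.2 hcd)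

end Antitone

theorem mul_sum_le_mul_sum_of_mul_le {ι : Type*} {s : Finset ι} {x y w : ι → ℝ} {d e : ℝ}
    (hw : ∀ i ∈ s, 0 ≤ w i) (h : ∀ i ∈ s, e * x i ≤ d * y i) :
    e * ∑ i ∈ s, x i * w i ≤ d * ∑ i ∈ s, y i * w i := by
  simp only [mul_sum, ← mul_assoc]
  exact sum_le_sum fun i hi => mul_le_mul_of_nonneg_right (h i hi) (hw i hi)

theorem mul_add_mul_le_add_mul_mul {a b d e p : ℝ} (hp : 0 ≤ p) (h : e * a ≤ d * b) :
    a * (b + e * p) ≤ (a + d * p) * b := by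
  nlinarith

theorem sum_Icc_one_succ {M : Type*} [AddCommMonoid M] (f : ℕ → M) (n : ℕ) :
    ∑ i ∈ Icc 1 (n + 1), f i = ∑ i ∈ Icc 1 n, f i + f (n + 1) :=
  sum_Icc_succ_top (by omega) f

theorem stmt_11_general
    (T : ℕ → ℝ) (hT : StrictMono T)
    (q : ℝ → ℝ) (hq : Antitone q)
    (Q : ℝ → ℝ) (hQ : ∀ x, Q x = ∫ u in (0:ℝ)..x, q u)
    (P : ℝ → ℝ) (hP0 : ∀ i, 1 ≤ i → 0 < P (T i))
    (A Ad : ℕ → ℝ)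
    (hA : ∀ n, A n = ∑ i ∈ Icc 1 n, (T i - T (i - 1)) * P (T i))
    (hAd : ∀ n, Ad n = ∑ i ∈ Icc 1 n, (Q (T i) - Q (T (i - 1))) * P (T i)) :
    ∀ n : ℕ, 1 ≤ n → A n * Ad (n + 1) ≤ A (n + 1) * Ad n := by
  intro n _
  have hQ_sub (a b : ℝ) : Q b - Q a = ∫ u in a..b, q u := by
    rw [hQ, hQ, intervalIntegral.integral_interval_sub_left hq.intervalIntegrable
      hq.intervalIntegrable]
  have hterm : ∀ i ∈ Icc 1 n, (Q (T (n + 1)) - Q (T n)) * (T i - T (i - 1)) ≤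
      (T (n + 1) - T n) * (Q (T i) - Q (T (i - 1))) := by
    intro i hi
    rw [mem_Icc] at hi
    rw [hQ_sub, hQ_sub, mul_comm]
    exact hq.mul_intervalIntegral_le_of_le (hT.monotone (by omega)) (hT.monotone hi.2)
      (hT.monotone (by omega))
  have hsum := mul_sum_le_mul_sum_of_mul_le (fun i hi => (hP0 i (mem_Icc.1 hi).1).le) hterm
  rw [hA, hAd, hA, hAd, sum_Icc_one_succ, sum_Icc_one_succ, Nat.add_sub_cancel]
  exact mul_add_mul_le_add_mul_mul (hP0 (n + 1) (by omega)).le hsum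

/-- The ratio `A_n/A^d_n` of the discrete-time standardized risk-free annuity to the
defaultable one is nondecreasing in `n`, in cross-multiplied form:
`A_{n+1}·A^d_n ≥ A_n·A^d_{n+1}` for all `n ≥ 1`. -/
theorem stmt_11
    (T : ℕ → ℝ) (hT : StrictMono T)
    (q : ℝ → ℝ) (hq : Antitone q) (hq0 : ∀ t, 0 < q t)
    (Q : ℝ → ℝ) (hQ : ∀ x, Q x = ∫ u in (0:ℝ)..x, q u)
    (P : ℝ → ℝ) (hP0 : ∀ i, 1 ≤ i → 0 < P (T i))
    (A Ad : ℕ → ℝ)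
    (hA : ∀ n, A n = ∑ i ∈ Icc 1 n, (T i - T (i - 1)) * P (T i))
    (hAd : ∀ n, Ad n = ∑ i ∈ Icc 1 n, (Q (T i) - Q (T (i - 1))) * P (T i)) :
    ∀ n : ℕ, 1 ≤ n → A n * Ad (n + 1) ≤ A (n + 1) * Ad n :=
  stmt_11_general T hT q hq Q hQ P hP0 A Ad hA hAd
end

section
/- Fix T0 ∈ ℝ and let I : ℝ → ℝ be continuous. Define Φ(U,T) := exp(−∫_U^T I(V) dV) and F(T) := 1 − I(T)·∫_{T0}^T Φ(U,T) dU. Then for every T ≥ T0, I(T)·∫_{T0}^T F(t) dt = 1 − F(T). -/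
/-!
With `J t = ∫_{T0}^t I`, the kernel factors as `Φ(U,T) = exp(J U) · exp(-J T)`, so
`g T := ∫_{T0}^T Φ(U,T) dU` solves the linear ODE `g' = 1 - I g` with `g T0 = 0`.
Since `F = 1 - I g = g'`, the fundamental theorem of calculus gives `∫_{T0}^T F = g T`,
and `I T · g T = 1 - F T` is the definition of `F`.
-/

open Real intervalIntegral

section

variable {I : ℝ → ℝ}

theorem integral_exp_neg_integral_eq_mul (hI : Continuous I) (a b : ℝ) :
    ∫ U in a..b, exp (-∫ V in U..b, I V) =
      exp (-∫ V in a..b, I V) * ∫ U in a..b, exp (∫ V in a..U, I V) := by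
  rw [← integral_const_mul]
  congr 1 with U
  rw [← exp_add, ← integral_add_adjacent_intervals (hI.intervalIntegrable a U)
    (hI.intervalIntegrable U b)]
  ring_nf

theorem hasDerivAt_integral_exp_neg_integral (hI : Continuous I) (a t : ℝ) :
    HasDerivAt (fun T => ∫ U in a..T, exp (-∫ V in U..T, I V))
      (1 - I t * ∫ U in a..t, exp (-∫ V in U..t, I V)) t := by
  have hJ : ∀ s, HasDerivAt (fun T => ∫ V in a..T, I V) (I s) s := fun s =>
    integral_hasDerivAt_right (hI.intervalIntegrable a s) (hI.stronglyMeasurableAtFilter _ _)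
      hI.continuousAt
  have hE : Continuous fun U => exp (∫ V in a..U, I V) :=
    continuous_exp.comp (continuous_iff_continuousAt.2 fun s => (hJ s).continuousAt)
  have hH : HasDerivAt (fun T => ∫ U in a..T, exp (∫ V in a..U, I V))
      (exp (∫ V in a..t, I V)) t :=
    integral_hasDerivAt_right (hE.intervalIntegrable a t) (hE.stronglyMeasurableAtFilter _ _)
      hE.continuousAt
  simp only [integral_exp_neg_integral_eq_mul hI]
  refine ((hJ t).neg.exp.mul hH).congr_deriv ?_
  rw [mul_assoc, ← exp_add, Pi.neg_apply, neg_add_cancel, exp_zero]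
  ring

theorem integral_one_sub_mul_integral_exp_neg_integral (hI : Continuous I) (a b : ℝ) :
    ∫ t in a..b, (1 - I t * ∫ U in a..t, exp (-∫ V in U..t, I V)) =
      ∫ U in a..b, exp (-∫ V in U..b, I V) := by
  have hg := hasDerivAt_integral_exp_neg_integral hI a
  have hg_cont : Continuous fun T => ∫ U in a..T, exp (-∫ V in U..T, I V) :=
    continuous_iff_continuousAt.2 fun t => (hg t).continuousAt
  rw [integral_eq_sub_of_hasDerivAt (fun t _ => hg t)
    ((continuous_const.sub (hI.mul hg_cont)).intervalIntegrable a b)]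
  simp

end

/-- The forward bond price `F(T) = 1 − I(T)·∫_{T0}^T Φ(U,T) dU`, with
`Φ(U,T) = exp(−∫_U^T I)`, reconstructed from the forward IRS curve `I`, satisfies the
fundamental IRS relation `I(T)·∫_{T0}^T F = 1 − F(T)` for all `T ≥ T0`. -/
theorem stmt_14
    (T0 : ℝ) (I : ℝ → ℝ) (hI : Continuous I)
    (Φ : ℝ → ℝ → ℝ) (hΦ : ∀ U T, Φ U T = Real.exp (-∫ V in U..T, I V))
    (F : ℝ → ℝ) (hF : ∀ T, F T = 1 - I T * ∫ U in T0..T, Φ U T) :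
    ∀ T, T0 ≤ T → I T * (∫ t in T0..T, F t) = 1 - F T := by
  intro T _
  simp only [hF, hΦ, integral_one_sub_mul_integral_exp_neg_integral hI]
  ring
end

section
/- Fix T0 ∈ ℝ. Let q : ℝ → ℝ be antitone with q(t) > 0 for all t, let P : ℝ → ℝ be continuous with P(t) > 0 for all t, and let N : ℝ → ℝ be nondecreasing with N(T) ≥ 0 for all T. For T > T0 define s(T) := N(T)/∫_{T0}^T P(t)·q(t) dt. Suppose I : ℝ → ℝ is continuous and satisfies I(T)·∫_{T0}^T P(t) dt = P(T0) − P(T) for all T ≥ T0. Then the function T ↦ (∫_{T0}^T exp(−∫_U^T I(V) dV) dU)·s(T) is nondecreasing on (T0, ∞). -/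
/-!
Write `A(T) = ∫_{T0}^T P` and `E(U) = exp(∫_{T0}^U I)`. The IRS relation `I·A = P(T0) − P` says
exactly that `(A·E)' = P(T0)·E`, so `A(T)·E(T) = P(T0)·∫_{T0}^T E`, i.e. the IRS annuity factor
`∫_{T0}^T exp(−∫_U^T I) dU` equals `A(T)/P(T0)`. The function in question is therefore
`N(T)/P(T0) · A(T)/B(T)` with `B(T) = ∫_{T0}^T P·q`; since `B/A` is a `P`-weighted average of the
antitone `q` over `[T0, T]`, it decreases in `T`, and the product of the two nonnegative
nondecreasing factors is nondecreasing.
-/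

open MeasureTheory Set

section AnnuityFactor

variable {I P : ℝ → ℝ} {a b c : ℝ}

theorem integral_exp_primitive_mul_eq (hI : Continuous I) (hP : Continuous P)
    (hIP : ∀ x ∈ uIcc a b, I x * (∫ t in a..x, P t) = c - P x) :
    (∫ U in a..b, Real.exp (∫ V in a..U, I V)) * c
      = (∫ t in a..b, P t) * Real.exp (∫ V in a..b, I V) := by
  have hE : Continuous fun U => Real.exp (∫ V in a..U, I V) :=
    Real.continuous_exp.comp
      (intervalIntegral.continuous_primitive (fun _ _ => hI.intervalIntegrable _ _) a)
  have hderiv : ∀ x ∈ uIcc a b, HasDerivAt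
      (fun T => (∫ t in a..T, P t) * Real.exp (∫ V in a..T, I V))
      (Real.exp (∫ V in a..x, I V) * c) x := by
    intro x hx
    have hA := (hP.integral_hasStrictDerivAt a x).hasDerivAt
    have hExp := ((hI.integral_hasStrictDerivAt a x).hasDerivAt).exp
    refine (hA.mul hExp).congr_deriv ?_
    linear_combination Real.exp (∫ V in a..x, I V) * hIP x hx
  rw [← intervalIntegral.integral_mul_const,
    intervalIntegral.integral_eq_sub_of_hasDerivAt hderiv
      ((hE.mul continuous_const).intervalIntegrable a b)]
  simp

theorem integral_exp_neg_integral_eq_div (hI : Continuous I) (hP : Continuous P) (hc : c ≠ 0)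
    (hIP : ∀ x ∈ uIcc a b, I x * (∫ t in a..x, P t) = c - P x) :
    ∫ U in a..b, Real.exp (-∫ V in U..b, I V) = (∫ t in a..b, P t) / c := by
  have hsplit : ∀ U, Real.exp (-∫ V in U..b, I V)
      = Real.exp (∫ V in a..U, I V) * Real.exp (-∫ V in a..b, I V) := by
    intro U
    rw [← Real.exp_add, ← intervalIntegral.integral_add_adjacent_intervals
      (hI.intervalIntegrable a U) (hI.intervalIntegrable U b)]
    ring_nf
  rw [intervalIntegral.integral_congr fun U _ => hsplit U, intervalIntegral.integral_mul_const,
    eq_div_iff hc, mul_right_comm, integral_exp_primitive_mul_eq hI hP hIP, mul_assoc,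
    ← Real.exp_add, add_neg_cancel, Real.exp_zero, mul_one]

end AnnuityFactor

section WeightedAverage

variable {P q : ℝ → ℝ} {a b : ℝ}

theorem intervalIntegrable_mul_of_antitone (hP : Continuous P) (hq : Antitone q) :
    IntervalIntegrable (fun t => P t * q t) volume a b :=
  hq.intervalIntegrable.continuousOn_mul hP.continuousOn

theorem mul_integral_le_integral_mul_of_antitone_s17 (hP : Continuous P) (hP0 : ∀ t, 0 ≤ P t)
    (hq : Antitone q) (hab : a ≤ b) :
    q b * (∫ t in a..b, P t) ≤ ∫ t in a..b, P t * q t := by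
  rw [← intervalIntegral.integral_const_mul]
  refine intervalIntegral.integral_mono_on hab ((hP.intervalIntegrable a b).const_mul _)
    (intervalIntegrable_mul_of_antitone hP hq) fun t ht => ?_
  rw [mul_comm]
  exact mul_le_mul_of_nonneg_left (hq ht.2) (hP0 t)

theorem integral_mul_le_mul_integral_of_antitone_s17 (hP : Continuous P) (hP0 : ∀ t, 0 ≤ P t)
    (hq : Antitone q) (hab : a ≤ b) :
    ∫ t in a..b, P t * q t ≤ q a * ∫ t in a..b, P t := by
  rw [← intervalIntegral.integral_const_mul]
  refine intervalIntegral.integral_mono_on hab (intervalIntegrable_mul_of_antitone hP hq)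
    ((hP.intervalIntegrable a b).const_mul _) fun t ht => ?_
  rw [mul_comm (q a)]
  exact mul_le_mul_of_nonneg_left (hq ht.1) (hP0 t)

theorem integral_mul_integral_mul_le_of_antitone (hP : Continuous P) (hP0 : ∀ t, 0 ≤ P t)
    (hq : Antitone q) {x y : ℝ} (hax : a ≤ x) (hxy : x ≤ y) :
    (∫ t in a..x, P t) * (∫ t in a..y, P t * q t)
      ≤ (∫ t in a..y, P t) * (∫ t in a..x, P t * q t) := by
  rw [← intervalIntegral.integral_add_adjacent_intervals (hP.intervalIntegrable a x)
      (hP.intervalIntegrable x y),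
    ← intervalIntegral.integral_add_adjacent_intervals (intervalIntegrable_mul_of_antitone hP hq)
      (intervalIntegrable_mul_of_antitone hP hq)]
  have hA : 0 ≤ ∫ t in a..x, P t := intervalIntegral.integral_nonneg hax fun t _ => hP0 t
  have hD : 0 ≤ ∫ t in x..y, P t := intervalIntegral.integral_nonneg hxy fun t _ => hP0 t
  have hlower := mul_integral_le_integral_mul_of_antitone_s17 hP hP0 hq hax
  have hupper := integral_mul_le_mul_integral_of_antitone_s17 hP hP0 hq hxy
  nlinarith [mul_le_mul_of_nonneg_left hupper hA, mul_le_mul_of_nonneg_right hlower hD]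

theorem monotoneOn_integral_div_integral_mul_of_antitone (hP : Continuous P)
    (hP0 : ∀ t, 0 < P t) (hq : Antitone q) (hq0 : ∀ t, 0 < q t) :
    MonotoneOn (fun T => (∫ t in a..T, P t) / ∫ t in a..T, P t * q t) (Ioi a) := by
  have hB : ∀ T ∈ Ioi a, 0 < ∫ t in a..T, P t * q t := fun T hT =>
    intervalIntegral.intervalIntegral_pos_of_pos_on (intervalIntegrable_mul_of_antitone hP hq)
      (fun t _ => mul_pos (hP0 t) (hq0 t)) hT
  intro x hx y hy hxy
  rw [div_le_div_iff₀ (hB x hx) (hB y hy)]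
  exact integral_mul_integral_mul_le_of_antitone hP (fun t => (hP0 t).le) hq (le_of_lt hx) hxy

end WeightedAverage

/-- No-arbitrage condition purely in terms of CDS and IRS rates: with
`Φ(U,T) = exp(−∫_U^T I)` built from the forward IRS rate `I` (related to bond prices by
`I(T)·∫_{T0}^T P = P(T0) − P(T)`), the function `T ↦ (∫_{T0}^T Φ(U,T) dU)·s(T)` is
nondecreasing on `(T0,∞)`. -/
theorem stmt_17
    (T0 : ℝ) (q P N : ℝ → ℝ)
    (hq : Antitone q) (hq0 : ∀ t, 0 < q t)
    (hP : Continuous P) (hP0 : ∀ t, 0 < P t)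
    (hN : Monotone N) (hN0 : ∀ T, 0 ≤ N T)
    (s : ℝ → ℝ) (hs : ∀ T, T0 < T → s T = N T / ∫ t in T0..T, P t * q t)
    (I : ℝ → ℝ) (hI : Continuous I)
    (hIP : ∀ T, T0 ≤ T → I T * (∫ t in T0..T, P t) = P T0 - P T) :
    MonotoneOn (fun T => (∫ U in T0..T, Real.exp (-∫ V in U..T, I V)) * s T)
      (Set.Ioi T0) := by
  have hfactor : EqOn
      ((fun T => N T / P T0) * fun T => (∫ t in T0..T, P t) / ∫ t in T0..T, P t * q t)
      (fun T => (∫ U in T0..T, Real.exp (-∫ V in U..T, I V)) * s T) (Ioi T0) := by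
    intro T hT
    have hIP' : ∀ x ∈ uIcc T0 T, I x * (∫ t in T0..x, P t) = P T0 - P x := fun x hx =>
      hIP x (uIcc_of_le (mem_Ioi.1 hT).le ▸ hx).1
    simp only [Pi.mul_apply, hs T hT,
      integral_exp_neg_integral_eq_div hI hP (hP0 T0).ne' hIP']
    ring
  refine MonotoneOn.congr (MonotoneOn.mul ?_
    (monotoneOn_integral_div_integral_mul_of_antitone hP hP0 hq hq0) ?_ ?_) hfactor
  · exact (hN.div_const (hP0 T0).le).monotoneOn _
  · exact fun T _ => div_nonneg (hN0 T) (hP0 T0).le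
  · exact fun T hT => div_nonneg
      (intervalIntegral.integral_nonneg (mem_Ioi.1 hT).le fun t _ => (hP0 t).le)
      (intervalIntegral.integral_nonneg (mem_Ioi.1 hT).le fun t _ => (mul_pos (hP0 t) (hq0 t)).le)
end
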